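/- arXiv:2301.10621 — 3 statements merged into one kernel-verified Lean document; each statement's English description precedes it below -/
import Mathlib

section
/- Let g ≥ 1, V = (ℤ/2)^{2g} with q₀(a) = aᵤᵗaₗ and symplectic form ⟨a,c⟩ = aᵤᵗcₗ + aₗᵗcᵤ. Fix c ∈ V with cₗ ≠ 0. Then ∑_{b ∈ V, q₀(b+c)=1} (-1)^{q₀(b)} = 2^{g-1}, where the sum ranges over all b ∈ V such that the Arf-value condition q₀(b+c) = 1 holds. -/
open Finset

private def chi : AddChar (ZMod 2) ℤ where
  toFun x := (-1) ^ x.val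
  map_zero_eq_one' := by decide
  map_add_eq_mul' := by decide

private lemma chi_apply (x : ZMod 2) : chi x = (-1 : ℤ) ^ x.val := rfl

private lemma chi_sum {ι : Type*} (s : Finset ι) (f : ι → ZMod 2) :
    chi (∑ i ∈ s, f i) = ∏ i ∈ s, chi (f i) := by
  induction s using Finset.cons_induction with
  | empty => simp
  | cons a s ha ih => rw [Finset.sum_cons, Finset.prod_cons, chi.map_add_eq_mul, ih]

/-- The sum of the character over a nontrivial linear functional vanishes. -/
private lemma vanish (g : ℕ) (v : Fin g → ZMod 2) (hv : v ≠ 0) :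
    ∑ b : Fin g → ZMod 2, chi (∑ i, b i * v i) = 0 := by
  simp_rw [chi_sum]
  rw [← Fintype.piFinset_univ,
    ← Finset.prod_univ_sum (fun _ : Fin g => (Finset.univ : Finset (ZMod 2)))
      (fun i x => chi (x * v i))]
  obtain ⟨i, hi⟩ : ∃ i, v i ≠ 0 := by
    by_contra h; push_neg at h; exact hv (funext h)
  refine Finset.prod_eq_zero (Finset.mem_univ i) ?_
  have h1 : v i = 1 := by
    have : ∀ a : ZMod 2, a ≠ 0 → a = 1 := by decide
    exact this _ hi
  rw [h1]
  decide

/-- The full Arf sum: `∑_b χ(q₀ b) = 2 ^ g`. -/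
private lemma arf_sum (g : ℕ) :
    ∑ b : (Fin g → ZMod 2) × (Fin g → ZMod 2), chi (∑ i, b.1 i * b.2 i) = 2 ^ g := by
  rw [Fintype.sum_prod_type]
  have h1 : ∀ x : Fin g → ZMod 2,
      ∑ y : Fin g → ZMod 2, chi (∑ i, x i * y i)
        = ∏ i, ∑ t : ZMod 2, chi (x i * t) := by
    intro x
    simp_rw [chi_sum]
    rw [← Fintype.piFinset_univ,
      ← Finset.prod_univ_sum (fun _ : Fin g => (Finset.univ : Finset (ZMod 2)))
        (fun i t => chi (x i * t))]
  simp_rw [h1]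
  rw [← Fintype.piFinset_univ,
    ← Finset.prod_univ_sum (fun _ : Fin g => (Finset.univ : Finset (ZMod 2)))
      (fun _ a => ∑ t : ZMod 2, chi (a * t))]
  have h2 : (∑ a : ZMod 2, ∑ t : ZMod 2, chi (a * t)) = 2 := by decide
  simp [h2]

/-- For `c ∈ (ℤ/2)^{2g}` with `cₗ ≠ 0`,
`∑_{b : q₀(b+c) = 1} (-1)^{q₀(b)} = 2^{g-1}`. -/
theorem stmt3 (g : ℕ) (hg : 1 ≤ g)
    (c : (Fin g → ZMod 2) × (Fin g → ZMod 2)) (hc : c.2 ≠ 0) :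
    ∑ b ∈ Finset.univ.filter
        (fun b : (Fin g → ZMod 2) × (Fin g → ZMod 2) =>
          (∑ i, (b.1 i + c.1 i) * (b.2 i + c.2 i) : ZMod 2) = 1),
      (-1 : ℤ) ^ (∑ i, b.1 i * b.2 i : ZMod 2).val = 2 ^ (g - 1) := by
  let q : (Fin g → ZMod 2) × (Fin g → ZMod 2) → ZMod 2 := fun b => ∑ i, b.1 i * b.2 i
  let qc : (Fin g → ZMod 2) × (Fin g → ZMod 2) → ZMod 2 :=
    fun b => ∑ i, (b.1 i + c.1 i) * (b.2 i + c.2 i)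
  show ∑ b ∈ Finset.univ.filter (fun b => qc b = 1), chi (q b) = 2 ^ (g - 1)
  have hkey : ∀ b, chi (qc b) * chi (q b)
      = chi (∑ i, c.1 i * c.2 i) * (chi (∑ i, b.1 i * c.2 i) * chi (∑ i, b.2 i * c.1 i)) := by
    intro b
    rw [← chi.map_add_eq_mul, ← chi.map_add_eq_mul, ← chi.map_add_eq_mul]
    congr 1
    show (∑ i, (b.1 i + c.1 i) * (b.2 i + c.2 i)) + ∑ i, b.1 i * b.2 i
        = (∑ i, c.1 i * c.2 i) + ((∑ i, b.1 i * c.2 i) + ∑ i, b.2 i * c.1 i)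
    rw [← Finset.sum_add_distrib, ← Finset.sum_add_distrib, ← Finset.sum_add_distrib]
    refine Finset.sum_congr rfl fun i _ => ?_
    have : ∀ x y u v : ZMod 2, (x + u) * (y + v) + x * y = u * v + (x * v + y * u) := by decide
    exact this _ _ _ _
  have hB : ∑ b : (Fin g → ZMod 2) × (Fin g → ZMod 2), chi (qc b) * chi (q b) = 0 := by
    simp_rw [hkey]
    rw [← Finset.mul_sum]
    have h3 : ∑ b : (Fin g → ZMod 2) × (Fin g → ZMod 2),
        chi (∑ i, b.1 i * c.2 i) * chi (∑ i, b.2 i * c.1 i)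
        = (∑ x : Fin g → ZMod 2, chi (∑ i, x i * c.2 i))
          * (∑ y : Fin g → ZMod 2, chi (∑ i, y i * c.1 i)) := by
      rw [Finset.sum_mul_sum, Fintype.sum_prod_type]
    rw [h3, vanish g c.2 hc, zero_mul, mul_zero]
  have hA : ∑ b : (Fin g → ZMod 2) × (Fin g → ZMod 2), chi (q b) = 2 ^ g := arf_sum g
  have hsplit : ∑ b : (Fin g → ZMod 2) × (Fin g → ZMod 2), chi (q b) * (1 - chi (qc b))
      = 2 * ∑ b ∈ Finset.univ.filter (fun b => qc b = 1), chi (q b) := by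
    rw [← Finset.sum_filter_add_sum_filter_not Finset.univ (fun b => qc b = 1)]
    have e1 : ∀ b ∈ Finset.univ.filter (fun b => qc b = 1),
        chi (q b) * (1 - chi (qc b)) = 2 * chi (q b) := by
      intro b hb
      rw [Finset.mem_filter] at hb
      rw [hb.2]
      have h4 : chi 1 = -1 := rfl
      rw [h4]; ring
    have e2 : ∀ b ∈ Finset.univ.filter (fun b => ¬ qc b = 1),
        chi (q b) * (1 - chi (qc b)) = 0 := by
      intro b hb
      rw [Finset.mem_filter] at hb
      have h0 : qc b = 0 := by
        have : ∀ x : ZMod 2, x ≠ 1 → x = 0 := by decide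
        exact this _ hb.2
      rw [h0, chi.map_zero_eq_one]; ring
    rw [Finset.sum_congr rfl e1, Finset.sum_congr rfl e2, Finset.sum_const_zero, add_zero,
      Finset.mul_sum]
  have hLHS : ∑ b : (Fin g → ZMod 2) × (Fin g → ZMod 2), chi (q b) * (1 - chi (qc b))
      = 2 ^ g := by
    simp_rw [mul_sub, mul_one]
    rw [Finset.sum_sub_distrib, hA]
    have h5 : ∑ b : (Fin g → ZMod 2) × (Fin g → ZMod 2), chi (q b) * chi (qc b) = 0 := by
      rw [← hB]; exact Finset.sum_congr rfl fun b _ => mul_comm _ _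
    rw [h5, sub_zero]
  rw [hLHS] at hsplit
  have h2 : (2 : ℤ) ^ g = 2 * 2 ^ (g - 1) := by
    rw [← pow_succ']
    congr 1
    omega
  rw [h2] at hsplit
  have hfin := mul_left_cancel₀ (by norm_num : (2:ℤ) ≠ 0) hsplit.symm
  exact hfin
end

section
/- Let p ∈ k[x] be a monic separable polynomial of degree 3 over a field k of characteristic ≠ 2, and let R = k[x]/(p). The trace form q : R → k, f ↦ Tr_{R/k}(f²/p'(x)) (where p' is the derivative, invertible in R by separability) is isometric to the quadratic form ⟨1⟩ ⊕ ⟨1⟩ ⊕ ⟨−1⟩ over k. -/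
open Polynomial AdjoinRoot

private lemma modCoeff_eq {k : Type*} [Field k] {p : k[X]} (hmonic : p.Monic)
    (hdeg : p.natDegree = 3) (q s : k[X]) (t0 t1 t2 : k)
    (h : q = p * s + (C t0 + C t1 * X + C t2 * X ^ 2)) :
    q %ₘ p = C t0 + C t1 * X + C t2 * X ^ 2 := by
  have hd3 : (C t0 + C t1 * X + C t2 * X ^ 2).degree < p.degree := by
    rw [degree_eq_natDegree hmonic.ne_zero, hdeg]
    refine lt_of_le_of_lt (?_ : _ ≤ (2 : WithBot ℕ)) (by norm_num)
    compute_degree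
  rw [h, add_modByMonic, (modByMonic_eq_zero_iff_dvd hmonic).2 (dvd_mul_right _ _),
    zero_add, (modByMonic_eq_self_iff hmonic).2 hd3]

private lemma coeffs0 {k : Type*} [Field k] (t0 t1 t2 : k) :
    (C t0 + C t1 * X + C t2 * X ^ 2).coeff 0 = t0 := by
  simp [coeff_add, coeff_C, coeff_X, coeff_X_pow]

private lemma coeffs1 {k : Type*} [Field k] (t0 t1 t2 : k) :
    (C t0 + C t1 * X + C t2 * X ^ 2).coeff 1 = t1 := by
  simp [coeff_add, coeff_C, coeff_X, coeff_X_pow]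

private lemma coeffs2 {k : Type*} [Field k] (t0 t1 t2 : k) :
    (C t0 + C t1 * X + C t2 * X ^ 2).coeff 2 = t2 := by
  simp [coeff_add, coeff_C, coeff_X, coeff_X_pow]

set_option maxHeartbeats 1000000 in
private lemma lmm_eq {k : Type*} [Field k] {p : k[X]} (hmonic : p.Monic)
    (hdeg : p.natDegree = 3) (q : k[X]) (i j : Fin 3) :
    Algebra.leftMulMatrix ((AdjoinRoot.powerBasis' hmonic).basis.reindex (finCongr hdeg))
        (AdjoinRoot.mk p q) i j = ((q * X ^ (j : ℕ)) %ₘ p).coeff (i : ℕ) := by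
  rw [Algebra.leftMulMatrix_eq_repr_mul, Module.Basis.repr_reindex_apply, Module.Basis.reindex_apply,
    (AdjoinRoot.powerBasis' hmonic).basis_eq_pow]
  simp only [AdjoinRoot.powerBasis'_gen]
  have hbb : (AdjoinRoot.powerBasis' hmonic).basis = AdjoinRoot.powerBasisAux' hmonic := rfl
  rw [← AdjoinRoot.mk_X, ← map_pow, ← map_mul, hbb]
  rfl

set_option maxHeartbeats 1000000 in
private lemma trace_mk_eq {k : Type*} [Field k] {p : k[X]} (hmonic : p.Monic)
    (hdeg : p.natDegree = 3) (q : k[X]) :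
    Algebra.trace k (AdjoinRoot p) (AdjoinRoot.mk p q) =
      (q %ₘ p).coeff 0 + ((q * X) %ₘ p).coeff 1 + ((q * X ^ 2) %ₘ p).coeff 2 := by
  classical
  rw [Algebra.trace_eq_matrix_trace
    ((AdjoinRoot.powerBasis' hmonic).basis.reindex (finCongr hdeg)), Matrix.trace]
  simp only [Matrix.diag]
  rw [Fin.sum_univ_three, lmm_eq hmonic hdeg q 0 0, lmm_eq hmonic hdeg q 1 1,
    lmm_eq hmonic hdeg q 2 2]
  norm_num

set_option maxHeartbeats 4000000 in
/-- For a monic separable cubic `p` over a field of characteristic ≠ 2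
and `R = k[x]/(p)`, the trace form `f ↦ Tr_{R/k}(f²·p'(x)⁻¹)` is isometric to
`⟨1⟩ ⊕ ⟨1⟩ ⊕ ⟨-1⟩`. -/
theorem stmt14 (k : Type*) [Field k] [Invertible (2 : k)]
    (p : Polynomial k) (hmonic : p.Monic) (hsep : p.Separable)
    (hdeg : p.natDegree = 3)
    (u : AdjoinRoot p)
    (hu : u * Polynomial.aeval (AdjoinRoot.root p) (Polynomial.derivative p) = 1) :
    ∃ e : (Fin 3 → k) ≃ₗ[k] AdjoinRoot p,
      ∀ v : Fin 3 → k,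
        Algebra.trace k (AdjoinRoot p) ((e v) ^ 2 * u)
          = v 0 ^ 2 + v 1 ^ 2 - v 2 ^ 2 := by
  classical
  obtain ⟨a, ha⟩ : ∃ x, p.coeff 2 = x := ⟨_, rfl⟩
  obtain ⟨b, hb⟩ : ∃ x, p.coeff 1 = x := ⟨_, rfl⟩
  obtain ⟨c, hc⟩ : ∃ x, p.coeff 0 = x := ⟨_, rfl⟩
  have h2 : (2 : k) ≠ 0 := Invertible.ne_zero 2
  have hP : p = X ^ 3 + C a * X ^ 2 + C b * X + C c := by
    have h3 : p.coeff 3 = 1 := by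
      have := hmonic.coeff_natDegree; rwa [hdeg] at this
    ext n
    rcases n with _ | _ | _ | _ | n
    · simpa using hc
    · simpa using hb
    · simpa using ha
    · simpa using h3
    · have hn : p.natDegree < n + 4 := by rw [hdeg]; omega
      rw [coeff_eq_zero_of_natDegree_lt hn]
      simp only [coeff_add, coeff_C_mul, coeff_X_pow, coeff_C, coeff_X]
      rw [if_neg (by omega), if_neg (by omega), if_neg (by omega), if_neg (by omega)]
      simp
  have hder : derivative p = (C b + C (2*a) * X + C 3 * X^2 : Polynomial k) := by
    rw [hP]
    simp only [derivative_add, derivative_mul, derivative_C, derivative_X_pow, derivative_X]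
    simp only [map_add, map_sub, map_mul, map_pow, map_ofNat, map_one, map_neg, map_natCast]
    push_cast
    ring
  have hd : Polynomial.aeval (AdjoinRoot.root p) (Polynomial.derivative p)
      = AdjoinRoot.mk p (C b + C (2*a) * X + C 3 * X^2 : Polynomial k) := by rw [AdjoinRoot.aeval_eq, hder]
  rw [hd] at hu
  have hE0 : ((C b + C (2*a) * X + C 3 * X^2 : Polynomial k)) %ₘ p = C (b) + C (2*a) * X + C (3) * X ^ 2 :=
    modCoeff_eq hmonic hdeg _ ((0 : Polynomial k)) _ _ _ (by
      rw [hP]; simp only [map_add, map_sub, map_mul, map_pow, map_ofNat, map_one, map_neg]; ring)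
  have hE1 : ((C b + C (2*a) * X + C 3 * X^2 : Polynomial k) * X) %ₘ p = C (-3*c) + C (-2*b) * X + C (-a) * X ^ 2 :=
    modCoeff_eq hmonic hdeg _ (C (3)) _ _ _ (by
      rw [hP]; simp only [map_add, map_sub, map_mul, map_pow, map_ofNat, map_one, map_neg]; ring)
  have hE2 : ((C b + C (2*a) * X + C 3 * X^2 : Polynomial k) * X^2) %ₘ p = C (a*c) + C (-3*c + a*b) * X + C (-2*b + a^2) * X ^ 2 :=
    modCoeff_eq hmonic hdeg _ (C (-a) + C (3) * X) _ _ _ (by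
      rw [hP]; simp only [map_add, map_sub, map_mul, map_pow, map_ofNat, map_one, map_neg]; ring)
  have hT0_0 : (X^0 * (C (4*b^2 - 3*a*c - a^2*b) + C (-9*c + 7*a*b - 2*a^3) * X + C (6*b - 2*a^2) * X^2 : Polynomial k)) %ₘ p = C (4*b^2 - 3*a*c - a^2*b) + C (-9*c + 7*a*b - 2*a^3) * X + C (6*b - 2*a^2) * X ^ 2 :=
    modCoeff_eq hmonic hdeg _ ((0 : Polynomial k)) _ _ _ (by
      rw [hP]; simp only [map_add, map_sub, map_mul, map_pow, map_ofNat, map_one, map_neg]; ring)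
  have hT0_1 : (X^0 * (C (4*b^2 - 3*a*c - a^2*b) + C (-9*c + 7*a*b - 2*a^3) * X + C (6*b - 2*a^2) * X^2 : Polynomial k) * X) %ₘ p = C (-6*b*c + 2*a^2*c) + C (-2*b^2 - 3*a*c + a^2*b) * X + C (-9*c + a*b) * X ^ 2 :=
    modCoeff_eq hmonic hdeg _ (C (6*b - 2*a^2)) _ _ _ (by
      rw [hP]; simp only [map_add, map_sub, map_mul, map_pow, map_ofNat, map_one, map_neg]; ring)
  have hT0_2 : (X^0 * (C (4*b^2 - 3*a*c - a^2*b) + C (-9*c + 7*a*b - 2*a^3) * X + C (6*b - 2*a^2) * X^2 : Polynomial k) * X^2) %ₘ p = C (9*c^2 - a*b*c) + C (3*b*c - a*b^2 + 2*a^2*c) * X + C (-2*b^2 + 6*a*c) * X ^ 2 :=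
    modCoeff_eq hmonic hdeg _ (C (-9*c + a*b) + C (6*b - 2*a^2) * X) _ _ _ (by
      rw [hP]; simp only [map_add, map_sub, map_mul, map_pow, map_ofNat, map_one, map_neg]; ring)
  have hT1_0 : (X^1 * (C (4*b^2 - 3*a*c - a^2*b) + C (-9*c + 7*a*b - 2*a^3) * X + C (6*b - 2*a^2) * X^2 : Polynomial k)) %ₘ p = C (-6*b*c + 2*a^2*c) + C (-2*b^2 - 3*a*c + a^2*b) * X + C (-9*c + a*b) * X ^ 2 :=
    modCoeff_eq hmonic hdeg _ (C (6*b - 2*a^2)) _ _ _ (by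
      rw [hP]; simp only [map_add, map_sub, map_mul, map_pow, map_ofNat, map_one, map_neg]; ring)
  have hT1_1 : (X^1 * (C (4*b^2 - 3*a*c - a^2*b) + C (-9*c + 7*a*b - 2*a^3) * X + C (6*b - 2*a^2) * X^2 : Polynomial k) * X) %ₘ p = C (9*c^2 - a*b*c) + C (3*b*c - a*b^2 + 2*a^2*c) * X + C (-2*b^2 + 6*a*c) * X ^ 2 :=
    modCoeff_eq hmonic hdeg _ (C (-9*c + a*b) + C (6*b - 2*a^2) * X) _ _ _ (by
      rw [hP]; simp only [map_add, map_sub, map_mul, map_pow, map_ofNat, map_one, map_neg]; ring)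
  have hT1_2 : (X^1 * (C (4*b^2 - 3*a*c - a^2*b) + C (-9*c + 7*a*b - 2*a^3) * X + C (6*b - 2*a^2) * X^2 : Polynomial k) * X^2) %ₘ p = C (2*b^2*c - 6*a*c^2) + C (9*c^2 + 2*b^3 - 7*a*b*c) * X + C (3*b*c + a*b^2 - 4*a^2*c) * X ^ 2 :=
    modCoeff_eq hmonic hdeg _ (C (-2*b^2 + 6*a*c) + C (-9*c + a*b) * X + C (6*b - 2*a^2) * X^2) _ _ _ (by
      rw [hP]; simp only [map_add, map_sub, map_mul, map_pow, map_ofNat, map_one, map_neg]; ring)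
  have hT2_0 : (X^2 * (C (4*b^2 - 3*a*c - a^2*b) + C (-9*c + 7*a*b - 2*a^3) * X + C (6*b - 2*a^2) * X^2 : Polynomial k)) %ₘ p = C (9*c^2 - a*b*c) + C (3*b*c - a*b^2 + 2*a^2*c) * X + C (-2*b^2 + 6*a*c) * X ^ 2 :=
    modCoeff_eq hmonic hdeg _ (C (-9*c + a*b) + C (6*b - 2*a^2) * X) _ _ _ (by
      rw [hP]; simp only [map_add, map_sub, map_mul, map_pow, map_ofNat, map_one, map_neg]; ring)
  have hT2_1 : (X^2 * (C (4*b^2 - 3*a*c - a^2*b) + C (-9*c + 7*a*b - 2*a^3) * X + C (6*b - 2*a^2) * X^2 : Polynomial k) * X) %ₘ p = C (2*b^2*c - 6*a*c^2) + C (9*c^2 + 2*b^3 - 7*a*b*c) * X + C (3*b*c + a*b^2 - 4*a^2*c) * X ^ 2 :=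
    modCoeff_eq hmonic hdeg _ (C (-2*b^2 + 6*a*c) + C (-9*c + a*b) * X + C (6*b - 2*a^2) * X^2) _ _ _ (by
      rw [hP]; simp only [map_add, map_sub, map_mul, map_pow, map_ofNat, map_one, map_neg]; ring)
  have hT2_2 : (X^2 * (C (4*b^2 - 3*a*c - a^2*b) + C (-9*c + 7*a*b - 2*a^3) * X + C (6*b - 2*a^2) * X^2 : Polynomial k) * X^2) %ₘ p = C (-3*b*c^2 - a*b^2*c + 4*a^2*c^2) + C (-b^2*c - 6*a*c^2 - a*b^3 + 4*a^2*b*c) * X + C (9*c^2 + 2*b^3 - 10*a*b*c - a^2*b^2 + 4*a^3*c) * X ^ 2 :=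
    modCoeff_eq hmonic hdeg _ (C (3*b*c + a*b^2 - 4*a^2*c) + C (-2*b^2 + 6*a*c) * X + C (-9*c + a*b) * X^2 + C (6*b - 2*a^2) * X^3) _ _ _ (by
      rw [hP]; simp only [map_add, map_sub, map_mul, map_pow, map_ofNat, map_one, map_neg]; ring)
  have hT3_0 : (X^3 * (C (4*b^2 - 3*a*c - a^2*b) + C (-9*c + 7*a*b - 2*a^3) * X + C (6*b - 2*a^2) * X^2 : Polynomial k)) %ₘ p = C (2*b^2*c - 6*a*c^2) + C (9*c^2 + 2*b^3 - 7*a*b*c) * X + C (3*b*c + a*b^2 - 4*a^2*c) * X ^ 2 :=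
    modCoeff_eq hmonic hdeg _ (C (-2*b^2 + 6*a*c) + C (-9*c + a*b) * X + C (6*b - 2*a^2) * X^2) _ _ _ (by
      rw [hP]; simp only [map_add, map_sub, map_mul, map_pow, map_ofNat, map_one, map_neg]; ring)
  have hT3_1 : (X^3 * (C (4*b^2 - 3*a*c - a^2*b) + C (-9*c + 7*a*b - 2*a^3) * X + C (6*b - 2*a^2) * X^2 : Polynomial k) * X) %ₘ p = C (-3*b*c^2 - a*b^2*c + 4*a^2*c^2) + C (-b^2*c - 6*a*c^2 - a*b^3 + 4*a^2*b*c) * X + C (9*c^2 + 2*b^3 - 10*a*b*c - a^2*b^2 + 4*a^3*c) * X ^ 2 :=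
    modCoeff_eq hmonic hdeg _ (C (3*b*c + a*b^2 - 4*a^2*c) + C (-2*b^2 + 6*a*c) * X + C (-9*c + a*b) * X^2 + C (6*b - 2*a^2) * X^3) _ _ _ (by
      rw [hP]; simp only [map_add, map_sub, map_mul, map_pow, map_ofNat, map_one, map_neg]; ring)
  have hT3_2 : (X^3 * (C (4*b^2 - 3*a*c - a^2*b) + C (-9*c + 7*a*b - 2*a^3) * X + C (6*b - 2*a^2) * X^2 : Polynomial k) * X^2) %ₘ p = C (-9*c^3 - 2*b^3*c + 10*a*b*c^2 + a^2*b^2*c - 4*a^3*c^2) + C (-12*b*c^2 - 2*b^4 + 9*a*b^2*c + 4*a^2*c^2 + a^2*b^3 - 4*a^3*b*c) * X + C (-b^2*c - 15*a*c^2 - 3*a*b^3 + 14*a^2*b*c + a^3*b^2 - 4*a^4*c) * X ^ 2 :=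
    modCoeff_eq hmonic hdeg _ (C (9*c^2 + 2*b^3 - 10*a*b*c - a^2*b^2 + 4*a^3*c) + C (3*b*c + a*b^2 - 4*a^2*c) * X + C (-2*b^2 + 6*a*c) * X^2 + C (-9*c + a*b) * X^3 + C (6*b - 2*a^2) * X^4) _ _ _ (by
      rw [hP]; simp only [map_add, map_sub, map_mul, map_pow, map_ofNat, map_one, map_neg]; ring)
  have hT4_0 : (X^4 * (C (4*b^2 - 3*a*c - a^2*b) + C (-9*c + 7*a*b - 2*a^3) * X + C (6*b - 2*a^2) * X^2 : Polynomial k)) %ₘ p = C (-3*b*c^2 - a*b^2*c + 4*a^2*c^2) + C (-b^2*c - 6*a*c^2 - a*b^3 + 4*a^2*b*c) * X + C (9*c^2 + 2*b^3 - 10*a*b*c - a^2*b^2 + 4*a^3*c) * X ^ 2 :=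
    modCoeff_eq hmonic hdeg _ (C (3*b*c + a*b^2 - 4*a^2*c) + C (-2*b^2 + 6*a*c) * X + C (-9*c + a*b) * X^2 + C (6*b - 2*a^2) * X^3) _ _ _ (by
      rw [hP]; simp only [map_add, map_sub, map_mul, map_pow, map_ofNat, map_one, map_neg]; ring)
  have hT4_1 : (X^4 * (C (4*b^2 - 3*a*c - a^2*b) + C (-9*c + 7*a*b - 2*a^3) * X + C (6*b - 2*a^2) * X^2 : Polynomial k) * X) %ₘ p = C (-9*c^3 - 2*b^3*c + 10*a*b*c^2 + a^2*b^2*c - 4*a^3*c^2) + C (-12*b*c^2 - 2*b^4 + 9*a*b^2*c + 4*a^2*c^2 + a^2*b^3 - 4*a^3*b*c) * X + C (-b^2*c - 15*a*c^2 - 3*a*b^3 + 14*a^2*b*c + a^3*b^2 - 4*a^4*c) * X ^ 2 :=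
    modCoeff_eq hmonic hdeg _ (C (9*c^2 + 2*b^3 - 10*a*b*c - a^2*b^2 + 4*a^3*c) + C (3*b*c + a*b^2 - 4*a^2*c) * X + C (-2*b^2 + 6*a*c) * X^2 + C (-9*c + a*b) * X^3 + C (6*b - 2*a^2) * X^4) _ _ _ (by
      rw [hP]; simp only [map_add, map_sub, map_mul, map_pow, map_ofNat, map_one, map_neg]; ring)
  have hT4_2 : (X^4 * (C (4*b^2 - 3*a*c - a^2*b) + C (-9*c + 7*a*b - 2*a^3) * X + C (6*b - 2*a^2) * X^2 : Polynomial k) * X^2) %ₘ p = C (b^2*c^2 + 15*a*c^3 + 3*a*b^3*c - 14*a^2*b*c^2 - a^3*b^2*c + 4*a^4*c^2) + C (-9*c^3 - b^3*c + 25*a*b*c^2 + 3*a*b^4 - 13*a^2*b^2*c - 4*a^3*c^2 - a^3*b^3 + 4*a^4*b*c) * X + C (-12*b*c^2 - 2*b^4 + 10*a*b^2*c + 19*a^2*c^2 + 4*a^2*b^3 - 18*a^3*b*c - a^4*b^2 + 4*a^5*c) * X ^ 2 :=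
    modCoeff_eq hmonic hdeg _ (C (-b^2*c - 15*a*c^2 - 3*a*b^3 + 14*a^2*b*c + a^3*b^2 - 4*a^4*c) + C (9*c^2 + 2*b^3 - 10*a*b*c - a^2*b^2 + 4*a^3*c) * X + C (3*b*c + a*b^2 - 4*a^2*c) * X^2 + C (-2*b^2 + 6*a*c) * X^3 + C (-9*c + a*b) * X^4 + C (6*b - 2*a^2) * X^5) _ _ _ (by
      rw [hP]; simp only [map_add, map_sub, map_mul, map_pow, map_ofNat, map_one, map_neg]; ring)
  have hMdet : (Algebra.leftMulMatrix
      ((AdjoinRoot.powerBasis' hmonic).basis.reindex (finCongr hdeg))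
      (AdjoinRoot.mk p (C b + C (2*a) * X + C 3 * X^2 : Polynomial k))).det = (27*c^2 + 4*b^3 - 18*a*b*c - a^2*b^2 + 4*a^3*c) := by
    rw [Matrix.det_fin_three]
    simp only [lmm_eq hmonic hdeg]
    simp only [Fin.val_zero, Fin.val_one, Fin.val_two, pow_zero, pow_one, mul_one, Fin.isValue]
    rw [hE0, hE1, hE2]
    simp only [coeffs0, coeffs1, coeffs2]
    ring
  have hDelta : (27*c^2 + 4*b^3 - 18*a*b*c - a^2*b^2 + 4*a^3*c) ≠ 0 := by
    have hunit : IsUnit (AdjoinRoot.mk p (C b + C (2*a) * X + C 3 * X^2 : Polynomial k)) :=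
      IsUnit.of_mul_eq_one u (by rw [mul_comm]; exact hu)
    have h4 := hunit.map (Algebra.leftMulMatrix
      ((AdjoinRoot.powerBasis' hmonic).basis.reindex (finCongr hdeg)))
    rw [Matrix.isUnit_iff_isUnit_det, hMdet] at h4
    exact h4.ne_zero
  have hWD : (C b + C (2*a) * X + C 3 * X^2 : Polynomial k) * (C (4*b^2 - 3*a*c - a^2*b) + C (-9*c + 7*a*b - 2*a^3) * X + C (6*b - 2*a^2) * X^2 : Polynomial k) = C (27*c^2 + 4*b^3 - 18*a*b*c - a^2*b^2 + 4*a^3*c) + p * (C (-27*c + 15*a*b - 4*a^3) + C (18*b - 6*a^2) * X) := by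
    rw [hP]
    simp only [map_add, map_sub, map_mul, map_pow, map_ofNat, map_one, map_neg]
    ring
  have hmkW : AdjoinRoot.mk p (C (4*b^2 - 3*a*c - a^2*b) + C (-9*c + 7*a*b - 2*a^3) * X + C (6*b - 2*a^2) * X^2 : Polynomial k) = (27*c^2 + 4*b^3 - 18*a*b*c - a^2*b^2 + 4*a^3*c) • u := by
    have h5 : (AdjoinRoot.mk p (C b + C (2*a) * X + C 3 * X^2 : Polynomial k)) * (AdjoinRoot.mk p (C (4*b^2 - 3*a*c - a^2*b) + C (-9*c + 7*a*b - 2*a^3) * X + C (6*b - 2*a^2) * X^2 : Polynomial k))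
        = algebraMap k (AdjoinRoot p) (27*c^2 + 4*b^3 - 18*a*b*c - a^2*b^2 + 4*a^3*c) := by
      rw [← map_mul, hWD, map_add, map_mul, AdjoinRoot.mk_self, zero_mul, add_zero,
        AdjoinRoot.algebraMap_eq]
      rfl
    calc AdjoinRoot.mk p (C (4*b^2 - 3*a*c - a^2*b) + C (-9*c + 7*a*b - 2*a^3) * X + C (6*b - 2*a^2) * X^2 : Polynomial k) = 1 * AdjoinRoot.mk p (C (4*b^2 - 3*a*c - a^2*b) + C (-9*c + 7*a*b - 2*a^3) * X + C (6*b - 2*a^2) * X^2 : Polynomial k) := (one_mul _).symm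
      _ = (u * AdjoinRoot.mk p (C b + C (2*a) * X + C 3 * X^2 : Polynomial k)) * AdjoinRoot.mk p (C (4*b^2 - 3*a*c - a^2*b) + C (-9*c + 7*a*b - 2*a^3) * X + C (6*b - 2*a^2) * X^2 : Polynomial k) := by rw [hu]
      _ = u * ((AdjoinRoot.mk p (C b + C (2*a) * X + C 3 * X^2 : Polynomial k)) * AdjoinRoot.mk p (C (4*b^2 - 3*a*c - a^2*b) + C (-9*c + 7*a*b - 2*a^3) * X + C (6*b - 2*a^2) * X^2 : Polynomial k)) := by ring
      _ = u * algebraMap k (AdjoinRoot p) (27*c^2 + 4*b^3 - 18*a*b*c - a^2*b^2 + 4*a^3*c) := by rw [h5]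
      _ = (27*c^2 + 4*b^3 - 18*a*b*c - a^2*b^2 + 4*a^3*c) • u := by rw [Algebra.smul_def]; ring
  have hTgen : ∀ j : ℕ, (AdjoinRoot.root p)^j * u
      = (27*c^2 + 4*b^3 - 18*a*b*c - a^2*b^2 + 4*a^3*c)⁻¹ • AdjoinRoot.mk p (X^j * (C (4*b^2 - 3*a*c - a^2*b) + C (-9*c + 7*a*b - 2*a^3) * X + C (6*b - 2*a^2) * X^2 : Polynomial k)) := by
    intro j
    have h6 : AdjoinRoot.mk p (X^j * (C (4*b^2 - 3*a*c - a^2*b) + C (-9*c + 7*a*b - 2*a^3) * X + C (6*b - 2*a^2) * X^2 : Polynomial k))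
        = (27*c^2 + 4*b^3 - 18*a*b*c - a^2*b^2 + 4*a^3*c) • ((AdjoinRoot.root p)^j * u) := by
      rw [map_mul, map_pow, AdjoinRoot.mk_X, hmkW, mul_smul_comm]
    rw [h6, smul_smul, inv_mul_cancel₀ hDelta, one_smul]
  have hTr0 : Algebra.trace k (AdjoinRoot p) ((AdjoinRoot.root p)^0 * u) = 0 := by
    rw [hTgen 0, map_smul, smul_eq_mul, trace_mk_eq hmonic hdeg,
      hT0_0, hT0_1, hT0_2, coeffs0, coeffs1, coeffs2]
    ring
  have hTr1 : Algebra.trace k (AdjoinRoot p) ((AdjoinRoot.root p)^1 * u) = 0 := by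
    rw [hTgen 1, map_smul, smul_eq_mul, trace_mk_eq hmonic hdeg,
      hT1_0, hT1_1, hT1_2, coeffs0, coeffs1, coeffs2]
    ring
  have hTr2 : Algebra.trace k (AdjoinRoot p) ((AdjoinRoot.root p)^2 * u) = 1 := by
    rw [hTgen 2, map_smul, smul_eq_mul, trace_mk_eq hmonic hdeg,
      hT2_0, hT2_1, hT2_2, coeffs0, coeffs1, coeffs2]
    rw [inv_mul_eq_div, div_eq_iff hDelta]
    ring
  have hTr3 : Algebra.trace k (AdjoinRoot p) ((AdjoinRoot.root p)^3 * u) = -a := by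
    rw [hTgen 3, map_smul, smul_eq_mul, trace_mk_eq hmonic hdeg,
      hT3_0, hT3_1, hT3_2, coeffs0, coeffs1, coeffs2]
    rw [inv_mul_eq_div, div_eq_iff hDelta]
    ring
  have hTr4 : Algebra.trace k (AdjoinRoot p) ((AdjoinRoot.root p)^4 * u) = a^2 - b := by
    rw [hTgen 4, map_smul, smul_eq_mul, trace_mk_eq hmonic hdeg,
      hT4_0, hT4_1, hT4_2, coeffs0, coeffs1, coeffs2]
    rw [inv_mul_eq_div, div_eq_iff hDelta]
    ring
  have hABmat : (!![(1+b)/2, 0, (1-b)/2; a, 1, -a; 1, 0, -1] : Matrix (Fin 3) (Fin 3) k)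
      * !![1, 0, (1-b)/2; 0, 1, -a; 1, 0, -((1+b)/2)] = 1 := by
    ext i j
    fin_cases i <;> fin_cases j <;>
      (simp [Matrix.mul_apply, Fin.sum_univ_three, Matrix.one_apply]; try field_simp; try ring)
  have hBAmat : (!![1, 0, (1-b)/2; 0, 1, -a; 1, 0, -((1+b)/2)] : Matrix (Fin 3) (Fin 3) k)
      * !![(1+b)/2, 0, (1-b)/2; a, 1, -a; 1, 0, -1] = 1 := by
    ext i j
    fin_cases i <;> fin_cases j <;>
      (simp [Matrix.mul_apply, Fin.sum_univ_three, Matrix.one_apply]; try field_simp; try ring)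
  refine ⟨(LinearEquiv.ofLinear
      (Matrix.toLin' (!![(1+b)/2, 0, (1-b)/2; a, 1, -a; 1, 0, -1] : Matrix (Fin 3) (Fin 3) k))
      (Matrix.toLin' (!![1, 0, (1-b)/2; 0, 1, -a; 1, 0, -((1+b)/2)] : Matrix (Fin 3) (Fin 3) k))
      (by rw [← Matrix.toLin'_mul, hABmat, Matrix.toLin'_one])
      (by rw [← Matrix.toLin'_mul, hBAmat, Matrix.toLin'_one]) :
      (Fin 3 → k) ≃ₗ[k] (Fin 3 → k)).trans
    (((AdjoinRoot.powerBasis' hmonic).basis.reindex (finCongr hdeg)).equivFun.symm), ?_⟩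
  intro v
  have hb3 : ∀ i : Fin 3,
      ((AdjoinRoot.powerBasis' hmonic).basis.reindex (finCongr hdeg)) i
        = (AdjoinRoot.root p) ^ (i : ℕ) := by
    intro i
    rw [Module.Basis.reindex_apply, (AdjoinRoot.powerBasis' hmonic).basis_eq_pow]
    simp only [AdjoinRoot.powerBasis'_gen]
    rfl
  rw [LinearEquiv.trans_apply, LinearEquiv.ofLinear_apply, Matrix.toLin'_apply,
    Module.Basis.equivFun_symm_apply, Fin.sum_univ_three, hb3 0, hb3 1, hb3 2]
  have hsq : ∀ α β γ : k,
      (α • ((AdjoinRoot.root p) ^ ((0:Fin 3):ℕ)) + β • ((AdjoinRoot.root p) ^ ((1:Fin 3):ℕ))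
        + γ • ((AdjoinRoot.root p) ^ ((2:Fin 3):ℕ)))^2 * u
      = (α^2) • ((AdjoinRoot.root p)^0 * u) + (2*(α*β)) • ((AdjoinRoot.root p)^1 * u)
        + (β^2 + 2*(α*γ)) • ((AdjoinRoot.root p)^2 * u)
        + (2*(β*γ)) • ((AdjoinRoot.root p)^3 * u)
        + (γ^2) • ((AdjoinRoot.root p)^4 * u) := by
    intro α β γ
    show (α • ((AdjoinRoot.root p) ^ (0:ℕ)) + β • ((AdjoinRoot.root p) ^ (1:ℕ))
        + γ • ((AdjoinRoot.root p) ^ (2:ℕ)))^2 * u = _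
    simp only [Algebra.smul_def, map_add, map_mul, map_pow, map_ofNat]
    ring
  rw [hsq, map_add, map_add, map_add, map_add, map_smul, map_smul, map_smul, map_smul,
    map_smul, hTr0, hTr1, hTr2, hTr3, hTr4]
  simp only [smul_eq_mul, Matrix.mulVec, dotProduct, Fin.sum_univ_three, Matrix.of_apply,
    Matrix.cons_val', Matrix.cons_val_zero, Matrix.cons_val_one, Matrix.head_cons,
    Matrix.empty_val', Matrix.cons_val_fin_one, Matrix.head_fin_const, Matrix.cons_val_two,
    Matrix.tail_cons]
  field_simp
  ring
end

section
/- Let g ≥ 1, V = (ℤ/2)^{2g}, q₀(a) = aᵤᵗaₗ, and c ∈ V with cₗ ≠ 0. For each d ∈ (ℤ/2)^g with d ≠ 0, let T_{c,d} = {b ∈ V : bₗ = d, (cᵤ+bᵤ)ᵗ(cₗ+d) = 1}. Then there exists f ∈ V with fₗ = 0, f ≠ 0, fᵤᵗ(cₗ+d) = 0 and fᵤᵗd = 1; for any such f, the map b ↦ b+f is a fixed-point-free involution of T_{c,d} satisfying q₀(b+f) = q₀(b) + 1. -/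
lemma stmt17_sum_single {g : ℕ} (i : Fin g) (v : Fin g → ZMod 2) :
    (∑ k, (Pi.single i 1 : Fin g → ZMod 2) k * v k) = v i := by
  simp [Pi.single_apply, ite_mul]

lemma stmt17_zmod2 (a : ZMod 2) (h : a ≠ 0) : a = 1 := by
  fin_cases a
  · exact absurd rfl h
  · rfl

/-- For `c` with `cₗ ≠ 0` and `0 ≠ d ∈ (ℤ/2)^g`, on
`T_{c,d} = {b : bₗ = d, (cᵤ+bᵤ)ᵗ(cₗ+d) = 1}` there exists `f` with `fₗ = 0`, `f ≠ 0`,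
`fᵤᵗ(cₗ+d) = 0`, `fᵤᵗd = 1`; and for any such `f`, `b ↦ b + f` is a fixed-point-free
involution of `T_{c,d}` with `q₀(b+f) = q₀(b) + 1`. -/
theorem stmt17 (g : ℕ) (hg : 1 ≤ g)
    (c : (Fin g → ZMod 2) × (Fin g → ZMod 2)) (hc : c.2 ≠ 0)
    (d : Fin g → ZMod 2) (hd : d ≠ 0) :
    (∃ f : (Fin g → ZMod 2) × (Fin g → ZMod 2), f.2 = 0 ∧ f ≠ 0 ∧
      (∑ i, f.1 i * (c.2 i + d i) : ZMod 2) = 0 ∧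
      (∑ i, f.1 i * d i : ZMod 2) = 1) ∧
    (∀ f : (Fin g → ZMod 2) × (Fin g → ZMod 2), f.2 = 0 → f ≠ 0 →
      (∑ i, f.1 i * (c.2 i + d i) : ZMod 2) = 0 →
      (∑ i, f.1 i * d i : ZMod 2) = 1 →
      ∀ b : (Fin g → ZMod 2) × (Fin g → ZMod 2),
        b.2 = d → (∑ i, (c.1 i + b.1 i) * (c.2 i + d i) : ZMod 2) = 1 →
        ((b + f).2 = d ∧
          (∑ i, (c.1 i + (b + f).1 i) * (c.2 i + d i) : ZMod 2) = 1 ∧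
          b + f ≠ b ∧
          (∑ i, (b + f).1 i * (b + f).2 i : ZMod 2) = (∑ i, b.1 i * b.2 i) + 1)) := by
  constructor
  · -- existence
    set e : Fin g → ZMod 2 := fun i => c.2 i + d i with he
    obtain ⟨j, hj⟩ : ∃ j, d j ≠ 0 := by
      by_contra h; push_neg at h; exact hd (funext h)
    have hdj : d j = 1 := stmt17_zmod2 _ hj
    by_cases hej : e j = 0
    · refine ⟨(Pi.single j 1, 0), rfl, ?_, ?_, ?_⟩
      · intro h
        have := congrFun (congrArg Prod.fst h) j
        simp at this
      · have h0 : e j = 0 := hej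
        exact (stmt17_sum_single j (fun k => c.2 k + d k)).trans h0
      · exact (stmt17_sum_single j d).trans hdj
    · have hej1 : e j = 1 := stmt17_zmod2 _ hej
      have hed : e ≠ d := by
        intro h
        apply hc
        funext i
        have := congrFun h i
        simp only [he] at this
        have h2 : c.2 i + d i = d i := this
        show c.2 i = 0
        linear_combination h2
      obtain ⟨i, hi⟩ : ∃ i, e i ≠ d i := by
        by_contra h; push_neg at h; exact hed (funext h)
      by_cases hdi : d i = 1
      · -- then e i = 0
        have hei : e i = 0 := by
          by_contra h; exact hi ((stmt17_zmod2 _ h).trans hdi.symm)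
        refine ⟨(Pi.single i 1, 0), rfl, ?_, ?_, ?_⟩
        · intro h
          have := congrFun (congrArg Prod.fst h) i
          simp at this
        · exact (stmt17_sum_single i (fun k => c.2 k + d k)).trans hei
        · exact (stmt17_sum_single i d).trans hdi
      · have hdi0 : d i = 0 := by
          by_contra h; exact hdi (stmt17_zmod2 _ h)
        have hei : e i = 1 := stmt17_zmod2 _ (by rw [hdi0] at hi; exact hi)
        have hij : i ≠ j := by intro h; rw [h, hdj] at hdi0; exact one_ne_zero hdi0
        refine ⟨(Pi.single i 1 + Pi.single j 1, 0), rfl, ?_, ?_, ?_⟩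
        · intro h
          have := congrFun (congrArg Prod.fst h) i
          simp [Pi.single_apply, hij] at this
        · have hsum : (∑ k, ((Pi.single i 1 : Fin g → ZMod 2) k + (Pi.single j 1 : Fin g → ZMod 2) k) * (c.2 k + d k))
              = (c.2 i + d i) + (c.2 j + d j) := by
            simp only [add_mul, Finset.sum_add_distrib, stmt17_sum_single]
          have h1 : c.2 i + d i = 1 := hei
          have h2 : c.2 j + d j = 1 := hej1
          show (∑ k, ((Pi.single i 1 : Fin g → ZMod 2) k + (Pi.single j 1 : Fin g → ZMod 2) k) * (c.2 k + d k)) = 0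
          rw [hsum, h1, h2]
          decide
        · have hsum : (∑ k, ((Pi.single i 1 : Fin g → ZMod 2) k + (Pi.single j 1 : Fin g → ZMod 2) k) * d k)
              = d i + d j := by
            simp only [add_mul, Finset.sum_add_distrib, stmt17_sum_single]
          show (∑ k, ((Pi.single i 1 : Fin g → ZMod 2) k + (Pi.single j 1 : Fin g → ZMod 2) k) * d k) = 1
          rw [hsum, hdi0, hdj, zero_add]
  · intro f hf2 hf hfe hfd b hb2 hbsum
    have hbf2 : (b + f).2 = d := by simp [Prod.snd_add, hf2, hb2]
    refine ⟨hbf2, ?_, ?_, ?_⟩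
    · have : (∑ i, (c.1 i + (b + f).1 i) * (c.2 i + d i))
          = (∑ i, (c.1 i + b.1 i) * (c.2 i + d i)) + ∑ i, f.1 i * (c.2 i + d i) := by
        rw [← Finset.sum_add_distrib]
        apply Finset.sum_congr rfl
        intro k _
        simp [Prod.fst_add]
        ring
      rw [this, hbsum, hfe, add_zero]
    · intro h
      apply hf
      have h1 : b.1 + f.1 = b.1 := congrArg Prod.fst h
      rw [add_eq_left] at h1
      exact Prod.ext h1 hf2
    · have : (∑ i, (b + f).1 i * (b + f).2 i)
          = (∑ i, b.1 i * b.2 i) + ∑ i, f.1 i * d i := by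
        rw [← Finset.sum_add_distrib]
        apply Finset.sum_congr rfl
        intro k _
        simp [Prod.fst_add, Prod.snd_add, hf2, hb2]
        ring
      rw [this, hfd]
end
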